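/- arXiv:1405.2327 — 4 statements merged into one kernel-verified Lean document; each statement's English description precedes it below -/
import Mathlib

section
/- Let X be a Hausdorff locally convex topological vector space, V ⊆ X a convex set, and U ⊆ V a self segment-dense subset of V. Then for every finite subset {u₁, …, uₙ} ⊆ U, the closure of conv{u₁, …, uₙ} ∩ U equals conv{u₁, …, uₙ}. -/
open Set Filter

section Defs
variable {X : Type*} [AddCommGroup X] [Module ℝ X]

/-- `U` is self segment-dense in `V` w.r.t. the topology `τ`. -/
def SelfSegmentDense (τ : TopologicalSpace X) (U V : Set X) : Prop :=
  U ⊆ V ∧ V ⊆ @closure X τ U ∧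
    ∀ x ∈ U, ∀ y ∈ U, segment ℝ x y ⊆ @closure X τ (segment ℝ x y ∩ U)

/-- Convexity of a set-valued map `F : X ⇉ ℝ` on a (possibly non-convex) set `D`. -/
def SVConvexOn (F : X → Set ℝ) (D : Set X) : Prop :=
  ∀ (n : ℕ) (p : Fin n → X) (w : Fin n → ℝ),
    (∀ i, p i ∈ D) → (∀ i, 0 ≤ w i) → (∑ i, w i) = 1 →
    (∑ i, w i • p i) ∈ D →
    ∀ g : Fin n → ℝ, (∀ i, g i ∈ F (p i)) →
      (∑ i, w i * g i) ∈ F (∑ i, w i • p i)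

/-- Concavity of a set-valued map `F : X ⇉ ℝ` on `D`. -/
def SVConcaveOn (F : X → Set ℝ) (D : Set X) : Prop :=
  ∀ (n : ℕ) (p : Fin n → X) (w : Fin n → ℝ),
    (∀ i, p i ∈ D) → (∀ i, 0 ≤ w i) → (∑ i, w i) = 1 →
    (∑ i, w i • p i) ∈ D →
    ∀ z ∈ F (∑ i, w i • p i), ∃ g : Fin n → ℝ,
      (∀ i, g i ∈ F (p i)) ∧ z = ∑ i, w i * g i

/-- Convexity of a real function on a (possibly non-convex) set `D`. -/
def FnConvexOn (f : X → ℝ) (D : Set X) : Prop :=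
  ∀ (n : ℕ) (p : Fin n → X) (w : Fin n → ℝ),
    (∀ i, p i ∈ D) → (∀ i, 0 ≤ w i) → (∑ i, w i) = 1 →
    (∑ i, w i • p i) ∈ D →
    f (∑ i, w i • p i) ≤ ∑ i, w i * f (p i)

/-- Concavity of a real function on `D`. -/
def FnConcaveOn (f : X → ℝ) (D : Set X) : Prop :=
  ∀ (n : ℕ) (p : Fin n → X) (w : Fin n → ℝ),
    (∀ i, p i ∈ D) → (∀ i, 0 ≤ w i) → (∑ i, w i) = 1 →
    (∑ i, w i • p i) ∈ D →
    ∑ i, w i * f (p i) ≤ f (∑ i, w i • p i)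

end Defs

section TopDefs
variable {X : Type*}

/-- Lower semicontinuity of a set-valued map at every point of `S`, within `K`. -/
def SVLscOn (τ : TopologicalSpace X) (F : X → Set ℝ) (K S : Set X) : Prop :=
  ∀ x ∈ S, ∀ N : Set ℝ, IsOpen N → (F x ∩ N).Nonempty →
    ∀ᶠ y in @nhdsWithin X τ x K, (F y ∩ N).Nonempty

/-- Upper semicontinuity of a set-valued map at every point of `S`, within `K`. -/
def SVUscOn (τ : TopologicalSpace X) (F : X → Set ℝ) (K S : Set X) : Prop :=
  ∀ x ∈ S, ∀ N : Set ℝ, IsOpen N → F x ⊆ N →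
    ∀ᶠ y in @nhdsWithin X τ x K, F y ⊆ N

/-- Upper semicontinuity of a real function at every point of `S`, within `K`. -/
def USCOn (τ : TopologicalSpace X) (f : X → ℝ) (K S : Set X) : Prop :=
  ∀ x ∈ S, ∀ b : ℝ, f x < b → ∀ᶠ y in @nhdsWithin X τ x K, f y < b

/-- Lower semicontinuity of a real function at every point of `S`, within `K`. -/
def LSCOn (τ : TopologicalSpace X) (f : X → ℝ) (K S : Set X) : Prop :=
  ∀ x ∈ S, ∀ b : ℝ, b < f x → ∀ᶠ y in @nhdsWithin X τ x K, b < f y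

end TopDefs

/-- The weak topology of a topological vector space. -/
def weakTop (X : Type*) [AddCommGroup X] [Module ℝ X] [TopologicalSpace X] : TopologicalSpace X :=
  ⨅ f : X →L[ℝ] ℝ, TopologicalSpace.induced f inferInstance

/-- A normed space is reflexive if the canonical inclusion into the double dual is surjective. -/
def IsReflexiveSpace (X : Type*) [NormedAddCommGroup X] [NormedSpace ℝ X] : Prop :=
  Function.Surjective (NormedSpace.inclusionInDoubleDual ℝ X)

/-!
Induction on the vertices. The polytope `conv (insert a s)` is the union of the segments `[a, z]`
with `z ∈ conv s`. By induction `z` is a limit of points `w ∈ conv s ∩ U`, and each point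
`(1 - t) a + t w` of `[a, w]` is a limit of points of `[a, w] ∩ U`; continuity of
`w ↦ (1 - t) a + t w` transfers this to `(1 - t) a + t z`. The reverse inclusion holds because
polytopes are compact, hence closed in a Hausdorff space.
-/

section SegmentDense

variable {X : Type*} [AddCommGroup X] [Module ℝ X] [TopologicalSpace X]
  [ContinuousAdd X] [ContinuousConstSMul ℝ X] {U : Set X}

lemma segment_subset_closure_inter_of_mem_closure {K B : Set X} {a z : X}
    (hseg : ∀ w ∈ U, segment ℝ a w ⊆ closure (segment ℝ a w ∩ U))
    (hK : Convex ℝ K) (ha : a ∈ K) (hBK : B ⊆ K) (hz : z ∈ closure (B ∩ U)) :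
    segment ℝ a z ⊆ closure (K ∩ U) := by
  rintro _ ⟨u, v, hu, hv, huv, rfl⟩
  have hmaps : MapsTo (fun w ↦ u • a + v • w) (B ∩ U) (closure (K ∩ U)) := by
    rintro w ⟨hwB, hwU⟩
    have hsegK : segment ℝ a w ∩ U ⊆ K ∩ U :=
      inter_subset_inter_left U (hK.segment_subset ha (hBK hwB))
    exact closure_mono hsegK (hseg w hwU ⟨u, v, hu, hv, huv, rfl⟩)
  simpa only [closure_closure] using map_mem_closure (by fun_prop) hz hmaps

lemma convexHull_subset_closure_convexHull_inter
    (hseg : ∀ x ∈ U, ∀ y ∈ U, segment ℝ x y ⊆ closure (segment ℝ x y ∩ U))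
    {s : Finset X} (hs : (s : Set X) ⊆ U) :
    convexHull ℝ (s : Set X) ⊆ closure (convexHull ℝ (s : Set X) ∩ U) := by
  rcases s.eq_empty_or_nonempty with rfl | hne
  · simp
  induction hne using Finset.Nonempty.cons_induction with
  | singleton a =>
    have ha : a ∈ U := hs (by simp)
    simpa using subset_closure (s := {a} ∩ U) ⟨rfl, ha⟩
  | cons a s has hne ih =>
    rw [Finset.coe_cons, Set.insert_subset_iff] at hs
    rw [Finset.coe_cons]
    conv_lhs => rw [convexHull_insert (Finset.coe_nonempty.mpr hne), convexJoin_singleton_left]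
    refine iUnion₂_subset fun z hz ↦ ?_
    refine segment_subset_closure_inter_of_mem_closure (hseg a hs.1) (convex_convexHull ℝ _)
      ?_ ?_ (ih hs.2 hz)
    · exact subset_convexHull ℝ _ (mem_insert a _)
    · exact convexHull_mono (subset_insert a _)

end SegmentDense

theorem closure_convexHull_inter_selfSegmentDense_general {X : Type*} [AddCommGroup X] [Module ℝ X]
    [TopologicalSpace X] [IsTopologicalAddGroup X] [ContinuousSMul ℝ X] [T2Space X]
    (V U : Set X)
    (hU : SelfSegmentDense (inferInstance : TopologicalSpace X) U V)
    (s : Finset X) (hs : (s : Set X) ⊆ U) :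
    closure (convexHull ℝ (s : Set X) ∩ U) = convexHull ℝ (s : Set X) := by
  refine Subset.antisymm ?_ (convexHull_subset_closure_convexHull_inter hU.2.2 hs)
  exact closure_minimal inter_subset_left (s.finite_toSet.isClosed_convexHull (𝕜 := ℝ))

/-- Lemma 5.1: for a self segment-dense subset `U` of a convex set `V`,
the trace of `U` on any finitely generated convex polytope with vertices in `U` is dense there. -/
theorem closure_convexHull_inter_selfSegmentDense {X : Type*} [AddCommGroup X] [Module ℝ X]
    [TopologicalSpace X] [IsTopologicalAddGroup X] [ContinuousSMul ℝ X] [T2Space X]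
    [LocallyConvexSpace ℝ X] (V U : Set X) (hV : Convex ℝ V)
    (hU : SelfSegmentDense (inferInstance : TopologicalSpace X) U V)
    (s : Finset X) (hs : (s : Set X) ⊆ U) :
    closure (convexHull ℝ (s : Set X) ∩ U) = convexHull ℝ (s : Set X) :=
  closure_convexHull_inter_selfSegmentDense_general V U hU s hs
end

section
/- Let V be the closed unit ball of ℝ³ and A the interior (relative to the plane z=0) of the square with vertices (−1,0,0), (0,−1,0), (1,0,0), (0,1,0). Then U = V \ A is dense in V but is not self segment-dense in V: for u₁ = (3/5, 3/5, 0) and u₂ = (−3/5, −3/5, 0), both in U, the set [u₁,u₂] ∩ U is not dense in [u₁,u₂], and hence cl(conv{u₁,u₂} ∩ U) ≠ conv{u₁,u₂}. -/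
/-!
The square lies in the plane `z = 0`, which has empty interior, so its complement in the ball
contains `interior V \ A`, which is still dense in the ball. The segment from
`u₁` to `u₂ = -u₁`, however, lies in that plane and passes through the centre `0` of the square;
since the square is open relative to the plane, a whole neighbourhood of `0` in the segment is
missing from `U`.
-/

open Set Filter

theorem subset_closure_diff_of_interior_eq_empty {X : Type*} [TopologicalSpace X] {V A : Set X}
    (hV : V ⊆ closure (interior V)) (hA : interior A = ∅) : V ⊆ closure (V \ A) := by
  have hdense : interior V ⊆ closure (interior V ∩ Aᶜ) :=
    (interior_eq_empty_iff_dense_compl.1 hA).open_subset_closure_inter isOpen_interior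
  calc V ⊆ closure (interior V) := hV
    _ ⊆ closure (interior V ∩ Aᶜ) := closure_minimal hdense isClosed_closure
    _ ⊆ closure (V \ A) := closure_mono fun x hx => ⟨interior_subset hx.1, hx.2⟩

theorem EuclideanSpace.interior_setOf_apply_eq_zero {ι : Type*} [Fintype ι] (i : ι) :
    interior {p : EuclideanSpace ℝ ι | p i = 0} = ∅ := by
  classical
  rw [← Set.not_nonempty_iff_eq_empty]
  intro hne
  have htop := (LinearMap.ker (EuclideanSpace.proj i).toLinearMap).eq_top_of_nonempty_interior' hne
  have hsingle : EuclideanSpace.single i (1 : ℝ) ∈ LinearMap.ker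
      (EuclideanSpace.proj i).toLinearMap := htop ▸ Submodule.mem_top
  simp at hsingle

/-- `A` need only be open relative to a convex set `H` containing the segment, as the square is
relative to the plane `z = 0`. -/
theorem not_segment_subset_closure_inter_diff {E : Type*} [AddCommGroup E] [Module ℝ E]
    [TopologicalSpace E] {x y z : E} {V A O H : Set E} (hO : IsOpen O) (hH : Convex ℝ H)
    (hA : O ∩ H ⊆ A) (hx : x ∈ H) (hy : y ∈ H) (hz : z ∈ segment ℝ x y) (hzO : z ∈ O) :
    ¬ segment ℝ x y ⊆ closure (segment ℝ x y ∩ (V \ A)) := by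
  intro hsub
  have hdisj : Disjoint O (segment ℝ x y ∩ (V \ A)) :=
    Set.disjoint_left.2 fun p hpO hp => hp.2.2 (hA ⟨hpO, hH.segment_subset hx hy hp.1⟩)
  exact Set.disjoint_left.1 (hdisj.closure_right hO) hzO (hsub hz)

/-- The open square `A` with vertices `(±1, 0, 0)`, `(0, ±1, 0)` in the plane `z = 0`. -/
def openSquare : Set (EuclideanSpace ℝ (Fin 3)) := {p | |p 0| + |p 1| < 1 ∧ p 2 = 0}

theorem closedBall_subset_closure_closedBall_diff_openSquare :
    Metric.closedBall (0 : EuclideanSpace ℝ (Fin 3)) 1 ⊆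
      closure (Metric.closedBall 0 1 \ openSquare) := by
  refine subset_closure_diff_of_interior_eq_empty ?_ ?_
  · rw [interior_closedBall _ one_ne_zero, closure_ball _ one_ne_zero]
  · rw [← Set.subset_empty_iff, ← EuclideanSpace.interior_setOf_apply_eq_zero (2 : Fin 3)]
    exact interior_mono fun p hp => hp.2

theorem mem_closedBall_diff_openSquare {a b : ℝ} (hab : a ^ 2 + b ^ 2 ≤ 1) (h : 1 ≤ |a| + |b|) :
    !₂[a, b, 0] ∈ Metric.closedBall (0 : EuclideanSpace ℝ (Fin 3)) 1 \ openSquare := by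
  refine ⟨?_, fun hA => h.not_gt (by simpa using hA.1)⟩
  rw [mem_closedBall_zero_iff, EuclideanSpace.norm_eq, Real.sqrt_le_one]
  simpa [Fin.sum_univ_three] using hab

theorem not_segment_subset_closure_inter_closedBall_diff_openSquare (u : EuclideanSpace ℝ (Fin 3))
    (hu : u 2 = 0) :
    ¬ segment ℝ u (-u) ⊆
      closure (segment ℝ u (-u) ∩ (Metric.closedBall 0 1 \ openSquare)) := by
  refine not_segment_subset_closure_inter_diff (O := {p | |p 0| + |p 1| < 1})
    (H := {p | p 2 = 0}) (z := 0) ?_ ?_ (fun _ => id) hu (by simp [hu]) ?_ (by simp)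
  · exact isOpen_lt (by fun_prop) continuous_const
  · exact convex_hyperplane (EuclideanSpace.proj (2 : Fin 3)).isLinear 0
  · simpa using midpoint_mem_segment (𝕜 := ℝ) u (-u)

/-- removing the open square from the unit ball of ℝ³ gives a dense but not
self segment-dense subset. -/
theorem dense_not_selfSegmentDense_example :
    ∀ u₁ u₂ : EuclideanSpace ℝ (Fin 3),
      u₁ = !₂[3/5, 3/5, 0] → u₂ = !₂[-3/5, -3/5, 0] →
      (Metric.closedBall (0 : EuclideanSpace ℝ (Fin 3)) 1 ⊆
        closure (Metric.closedBall (0 : EuclideanSpace ℝ (Fin 3)) 1 \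
          {p : EuclideanSpace ℝ (Fin 3) | |p 0| + |p 1| < 1 ∧ p 2 = 0})) ∧
      u₁ ∈ Metric.closedBall (0 : EuclideanSpace ℝ (Fin 3)) 1 \
          {p : EuclideanSpace ℝ (Fin 3) | |p 0| + |p 1| < 1 ∧ p 2 = 0} ∧
      u₂ ∈ Metric.closedBall (0 : EuclideanSpace ℝ (Fin 3)) 1 \
          {p : EuclideanSpace ℝ (Fin 3) | |p 0| + |p 1| < 1 ∧ p 2 = 0} ∧
      ¬ (segment ℝ u₁ u₂ ⊆ closure (segment ℝ u₁ u₂ ∩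
          (Metric.closedBall (0 : EuclideanSpace ℝ (Fin 3)) 1 \
            {p : EuclideanSpace ℝ (Fin 3) | |p 0| + |p 1| < 1 ∧ p 2 = 0}))) ∧
      closure (convexHull ℝ {u₁, u₂} ∩
          (Metric.closedBall (0 : EuclideanSpace ℝ (Fin 3)) 1 \
            {p : EuclideanSpace ℝ (Fin 3) | |p 0| + |p 1| < 1 ∧ p 2 = 0})) ≠
        convexHull ℝ {u₁, u₂} ∧
      ¬ SelfSegmentDense (inferInstance : TopologicalSpace (EuclideanSpace ℝ (Fin 3)))
        (Metric.closedBall (0 : EuclideanSpace ℝ (Fin 3)) 1 \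
          {p : EuclideanSpace ℝ (Fin 3) | |p 0| + |p 1| < 1 ∧ p 2 = 0})
        (Metric.closedBall (0 : EuclideanSpace ℝ (Fin 3)) 1) := by
  intro u₁ u₂ h₁ h₂
  have hneg : u₂ = -u₁ := by
    subst h₁ h₂
    ext i
    fin_cases i <;> simp <;> norm_num
  have hU₁ : u₁ ∈ Metric.closedBall 0 1 \ openSquare := h₁ ▸ mem_closedBall_diff_openSquare
    (by norm_num) (by norm_num [abs_of_pos])
  have hU₂ : u₂ ∈ Metric.closedBall 0 1 \ openSquare := h₂ ▸ mem_closedBall_diff_openSquare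
    (by norm_num) (by norm_num [abs_of_neg])
  have hnot : ¬ segment ℝ u₁ u₂ ⊆
      closure (segment ℝ u₁ u₂ ∩ (Metric.closedBall 0 1 \ openSquare)) :=
    hneg ▸ not_segment_subset_closure_inter_closedBall_diff_openSquare u₁ (by simp [h₁])
  refine ⟨closedBall_subset_closure_closedBall_diff_openSquare, hU₁, hU₂, hnot, ?_, ?_⟩
  · rw [convexHull_pair]
    exact fun heq => hnot heq.symm.subset
  · exact fun h => hnot (h.2.2 u₁ hU₁ u₂ hU₂)
end

section
/- Let A ⊆ ℝⁿ be nonempty compact and convex and suppose sup_{z ∈ A} ⟨z,y⟩ ≥ 0 for every y ∈ ℝⁿ with nonnegative coordinates summing to 1 (equivalently for every y in the simplex Mⁿ). Then A ∩ ℝ₊ⁿ ≠ ∅, i.e., A contains a point with all coordinates nonnegative. -/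
open Set Filter

/-! If `A` missed the nonnegative orthant, a hyperplane would strictly separate the compact convex
set `A` from the closed convex cone `ℝ₊ⁿ`. A functional bounded below on a cone is nonnegative on
it, so its Riesz vector `w` has nonnegative coordinates while `⟪z, w⟫ < 0` on `A`. Normalising `w`
to the simplex contradicts the hypothesis, because the supremum over the compact set `A` is
attained. -/

open scoped InnerProductSpace

theorem map_nonneg_of_lt_map_of_smul_mem {E : Type*} [AddCommGroup E] [Module ℝ E]
    (f : E →ₗ[ℝ] ℝ) {C : Set E} (hC : ∀ c ∈ C, ∀ t : ℝ, 0 ≤ t → t • c ∈ C) {v : ℝ}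
    (hv : ∀ c ∈ C, v < f c) {c : E} (hc : c ∈ C) : 0 ≤ f c := by
  by_contra! hneg
  have hv0 : v < 0 := by simpa using hv _ (hC c hc 0 le_rfl)
  have := hv _ (hC c hc (v / f c) (div_nonneg_of_nonpos hv0.le hneg.le))
  rw [f.map_smul, smul_eq_mul, div_mul_cancel₀ _ hneg.ne] at this
  exact this.false

def nonnegOrthant (ι : Type*) : Set (EuclideanSpace ℝ ι) := {x | ∀ i, 0 ≤ x i}

section Orthant

variable {ι : Type*}

theorem isClosed_nonnegOrthant : IsClosed (nonnegOrthant ι) := by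
  simp only [nonnegOrthant, Set.ofPred_forall]
  exact isClosed_iInter fun i => isClosed_le continuous_const (EuclideanSpace.proj i).continuous

theorem smul_mem_nonnegOrthant {x : EuclideanSpace ℝ ι} (hx : x ∈ nonnegOrthant ι) {t : ℝ}
    (ht : 0 ≤ t) : t • x ∈ nonnegOrthant ι :=
  fun i => mul_nonneg ht (hx i)

theorem convex_nonnegOrthant : Convex ℝ (nonnegOrthant ι) :=
  fun _ hx _ hy _ _ ha hb _ _ => add_nonneg (mul_nonneg ha (hx _)) (mul_nonneg hb (hy _))

theorem single_one_mem_nonnegOrthant [DecidableEq ι] (i : ι) :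
    EuclideanSpace.single i (1 : ℝ) ∈ nonnegOrthant ι := by
  intro j
  by_cases hj : j = i <;> simp [hj]

end Orthant

theorem exists_mem_inner_nonneg_of_sSup_nonneg {ι : Type*} [Fintype ι]
    {A : Set (EuclideanSpace ℝ ι)} (hne : A.Nonempty) (hcomp : IsCompact A)
    (h : ∀ y : EuclideanSpace ℝ ι, (∀ i, 0 ≤ y i) → (∑ i, y i) = 1 →
      0 ≤ sSup ((fun z => (inner ℝ z y : ℝ)) '' A))
    {w : EuclideanSpace ℝ ι} (hw : w ∈ nonnegOrthant ι) : ∃ z ∈ A, 0 ≤ ⟪z, w⟫_ℝ := by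
  set s := ∑ i, w i
  rcases (Finset.sum_nonneg fun i _ => hw i : 0 ≤ s).eq_or_lt with hs | hs
  · have hw0 : w = 0 := by
      ext i
      exact (Finset.sum_eq_zero_iff_of_nonneg fun j _ => hw j).mp hs.symm i (Finset.mem_univ i)
    obtain ⟨z, hz⟩ := hne
    exact ⟨z, hz, by simp [hw0]⟩
  set y := s⁻¹ • w
  have hy : (∀ i, 0 ≤ y i) ∧ ∑ i, y i = 1 := by
    refine ⟨fun i => mul_nonneg (inv_nonneg.mpr hs.le) (hw i), ?_⟩
    simp only [y, PiLp.smul_apply, smul_eq_mul, ← Finset.mul_sum]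
    exact inv_mul_cancel₀ hs.ne'
  have hmax : sSup ((fun z => ⟪z, y⟫_ℝ) '' A) ∈ (fun z => ⟪z, y⟫_ℝ) '' A :=
    (hcomp.image (continuous_id.inner continuous_const)).sSup_mem (hne.image _)
  obtain ⟨z, hz, hzy⟩ := hmax
  refine ⟨z, hz, ?_⟩
  have : 0 ≤ ⟪z, y⟫_ℝ := (h y hy.1 hy.2).trans_eq hzy.symm
  have hwy : w = s • y := by rw [smul_smul, mul_inv_cancel₀ hs.ne', one_smul]
  rw [hwy, inner_smul_right]
  positivity

/-- separation step of the Debreu–Gale–Nikaïdo theorem. -/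
theorem compact_convex_inter_orthant (n : ℕ) (A : Set (EuclideanSpace ℝ (Fin n)))
    (hne : A.Nonempty) (hcomp : IsCompact A) (hconv : Convex ℝ A)
    (h : ∀ y : EuclideanSpace ℝ (Fin n), (∀ i, 0 ≤ y i) → (∑ i, y i) = 1 →
      0 ≤ sSup ((fun z => (inner ℝ z y : ℝ)) '' A)) :
    ∃ z ∈ A, ∀ i, 0 ≤ z i := by
  by_contra! hcon
  have hdisj : Disjoint A (nonnegOrthant (Fin n)) := Set.disjoint_left.mpr fun z hz hzC => by
    obtain ⟨i, hi⟩ := hcon z hz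
    exact (hzC i).not_gt hi
  obtain ⟨f, u, v, hAu, huv, hCv⟩ := geometric_hahn_banach_compact_closed hconv hcomp
    convex_nonnegOrthant isClosed_nonnegOrthant hdisj
  have hf_nonneg : ∀ c ∈ nonnegOrthant (Fin n), 0 ≤ f c := fun c hc =>
    map_nonneg_of_lt_map_of_smul_mem f.toLinearMap (fun c hc _ => smul_mem_nonnegOrthant hc) hCv hc
  set w := (InnerProductSpace.toDual ℝ _).symm f
  have hfw : ∀ z, f z = ⟪z, w⟫_ℝ := fun z => by
    rw [real_inner_comm, InnerProductSpace.toDual_symm_apply]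
  have hw : w ∈ nonnegOrthant (Fin n) := fun i => by
    simpa [hfw, EuclideanSpace.inner_single_left] using
      hf_nonneg _ (single_one_mem_nonnegOrthant i)
  obtain ⟨z, hzA, hz⟩ := exists_mem_inner_nonneg_of_sSup_nonneg hne hcomp h hw
  have hv : v < 0 := by simpa using hCv 0 fun _ => le_rfl
  linarith [hfw z, hAu z hzA]
end

section
/- Let K be the closed unit ball of the Hilbert space ℓ² and D the unit sphere, and define φ : K × K → ℝ by φ(x,y) = ⟨x,y⟩ − 1. Then: (a) for all y ∈ K, x ↦ φ(x,y) is weakly continuous on K; (b) for all x ∈ K, y ↦ φ(x,y) is affine (hence convex and concave) on K; (c) φ(x,x) = 0 for all x ∈ D; and yet the equilibrium conclusion fails: there is no x₀ ∈ K with φ(x₀,y) ≥ 0 for all y ∈ K, since φ(x, 0) = −1 for all x ∈ K. -/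
/-!
Each map `x ↦ ⟪x, y⟫` is a continuous linear functional, hence weakly continuous, and
`y ↦ ⟪x, y⟫` is linear, so `φ` has all the regularity the equilibrium theorems ask for and
vanishes on the diagonal of the sphere. Yet testing against `y = 0` gives `φ(x₀, 0) = -1 < 0`
for every `x₀`: the sphere is weakly dense in the ball but contains no nondegenerate segment.
-/

open Set Filter

theorem continuous_weakTop_of_continuousLinearMap {X : Type*} [AddCommGroup X] [Module ℝ X]
    [TopologicalSpace X] (f : X →L[ℝ] ℝ) : @Continuous X ℝ (weakTop X) _ f :=
  continuous_iff_le_induced.2 (iInf_le _ f)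

theorem continuous_weakTop_inner_left {E : Type*} [NormedAddCommGroup E] [InnerProductSpace ℝ E]
    (y : E) : @Continuous E ℝ (weakTop E) _ (fun x => inner ℝ x y) := by
  simp only [real_inner_comm y]
  exact continuous_weakTop_of_continuousLinearMap (innerSL ℝ y)

/-- counterexample in ℓ² showing that the self segment-dense hypothesis
cannot be weakened to mere denseness. -/
theorem counterexample_l2 :
    (∀ y ∈ {x : lp (fun _ : ℕ => ℝ) 2 | ‖x‖ ≤ 1},
      @ContinuousOn (lp (fun _ : ℕ => ℝ) 2) ℝ (weakTop (lp (fun _ : ℕ => ℝ) 2)) _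
        (fun x => (inner ℝ x y : ℝ) - 1) {x : lp (fun _ : ℕ => ℝ) 2 | ‖x‖ ≤ 1}) ∧
    (∀ x ∈ {x : lp (fun _ : ℕ => ℝ) 2 | ‖x‖ ≤ 1},
      ∀ y₁ ∈ {x : lp (fun _ : ℕ => ℝ) 2 | ‖x‖ ≤ 1},
      ∀ y₂ ∈ {x : lp (fun _ : ℕ => ℝ) 2 | ‖x‖ ≤ 1},
      ∀ t : ℝ, 0 ≤ t → t ≤ 1 →
        ((inner ℝ x (t • y₁ + (1 - t) • y₂) : ℝ) - 1) =
          t * ((inner ℝ x y₁ : ℝ) - 1) + (1 - t) * ((inner ℝ x y₂ : ℝ) - 1)) ∧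
    (∀ x ∈ {x : lp (fun _ : ℕ => ℝ) 2 | ‖x‖ = 1}, (inner ℝ x x : ℝ) - 1 = 0) ∧
    (∀ x ∈ {x : lp (fun _ : ℕ => ℝ) 2 | ‖x‖ ≤ 1},
      (inner ℝ x (0 : lp (fun _ : ℕ => ℝ) 2) : ℝ) - 1 = -1) ∧
    ¬ ∃ x₀ ∈ {x : lp (fun _ : ℕ => ℝ) 2 | ‖x‖ ≤ 1},
        ∀ y ∈ {x : lp (fun _ : ℕ => ℝ) 2 | ‖x‖ ≤ 1}, 0 ≤ (inner ℝ x₀ y : ℝ) - 1 := by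
  refine ⟨?weaklyContinuous, ?affine, ?sphere, ?zero, ?noEquilibrium⟩
  case weaklyContinuous =>
    intro y _
    -- make the weak topology the instance that `Continuous.sub` and `continuous_const` pick up
    let _ := weakTop (lp (fun _ : ℕ => ℝ) 2)
    exact ((continuous_weakTop_inner_left y).sub continuous_const).continuousOn
  case affine =>
    intro x _ y₁ _ y₂ _ t _ _
    rw [inner_add_right, real_inner_smul_right, real_inner_smul_right]
    ring
  case sphere =>
    intro x hx
    rw [real_inner_self_eq_norm_sq, hx]
    norm_num
  case zero => simp
  case noEquilibrium =>
    rintro ⟨x₀, -, hx₀⟩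
    have := hx₀ 0 (by simp)
    norm_num at this
end
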